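/- For every β ∈ ℝ, the linear map φ : 𝔡_J → 𝔡_J defined by φ(v, v⁻, v⁺) = (v, v⁻, v⁺ + (β/2)·v⁻) is a Lie algebra automorphism of 𝔡_J satisfying B_β(x,y) = B₀(φ(x), φ(y)) for all x,y; hence the parameter β in the invariant scalar product B_β can always be set to zero by an automorphism. -/
import Mathlib


open scoped RealInnerProductSpace

/-- The bracket of the double extension `𝔡_J = 𝔡(V,ℝ)` on `V × ℝ × ℝ`, elements written
`(v, v⁻, v⁺)`: `[(v,v⁻,v⁺),(w,w⁻,w⁺)] = (v⁻·Jw − w⁻·Jv, 0, ⟨Jv, w⟩)`. -/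
def dJBracket {V : Type*} [NormedAddCommGroup V] [InnerProductSpace ℝ V]
    (J : V →ₗ[ℝ] V) (x y : V × ℝ × ℝ) : V × ℝ × ℝ :=
  (x.2.1 • J y.1 - y.2.1 • J x.1, 0, ⟪J x.1, y.1⟫)

/-- The symmetric bilinear form `B_β` on `𝔡_J`:
`B_β((v,v⁻,v⁺),(w,w⁻,w⁺)) = ⟨v,w⟩ + v⁺·w⁻ + w⁺·v⁻ + β·v⁻·w⁻`. -/
def dJForm {V : Type*} [NormedAddCommGroup V] [InnerProductSpace ℝ V]
    (β : ℝ) (x y : V × ℝ × ℝ) : ℝ :=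
  ⟪x.1, y.1⟫ + x.2.2 * y.2.1 + y.2.2 * x.2.1 + β * x.2.1 * y.2.1

/-- For every `β ∈ ℝ`, the map `φ(v, v⁻, v⁺) = (v, v⁻, v⁺ + (β/2)·v⁻)` is a Lie algebra
automorphism of `𝔡_J` with `B_β(x,y) = B₀(φ(x), φ(y))`; hence the parameter `β` in the
invariant scalar product can always be set to zero by an automorphism. -/
theorem dJForm_beta_eq_zero_by_automorphism
    {V : Type*} [NormedAddCommGroup V] [InnerProductSpace ℝ V] [FiniteDimensional ℝ V]
    (J : V →ₗ[ℝ] V) (hJ : ∀ v w : V, ⟪J v, w⟫ = -⟪v, J w⟫) (β : ℝ) :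
    let φ : V × ℝ × ℝ → V × ℝ × ℝ := fun x => (x.1, x.2.1, x.2.2 + (β / 2) * x.2.1)
    (∀ x y : V × ℝ × ℝ, φ (x + y) = φ x + φ y) ∧
    (∀ (r : ℝ) (x : V × ℝ × ℝ), φ (r • x) = r • φ x) ∧
    Function.Bijective φ ∧
    (∀ x y : V × ℝ × ℝ, φ (dJBracket J x y) = dJBracket J (φ x) (φ y)) ∧
    (∀ x y : V × ℝ × ℝ, dJForm β x y = dJForm 0 (φ x) (φ y)) := by
  intro φ
  refine ⟨?_, ?_, ?_, ?_, ?_⟩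
  · intro x y
    simp only [φ, Prod.fst_add, Prod.snd_add, Prod.mk_add_mk]
    ring_nf
  · intro r x
    simp only [φ, Prod.smul_fst, Prod.smul_snd, Prod.smul_mk, smul_eq_mul]
    ring_nf
  · constructor
    · intro x y h
      simp only [φ, Prod.mk.injEq] at h
      obtain ⟨h1, h2, h3⟩ := h
      have : x.2.2 = y.2.2 := by rw [h2] at h3; linarith
      exact Prod.ext h1 (Prod.ext h2 this)
    · intro y
      exact ⟨(y.1, y.2.1, y.2.2 - (β / 2) * y.2.1), by simp [φ]⟩
  · intro x y
    simp only [φ, dJBracket]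
    norm_num
  · intro x y
    simp only [φ, dJForm]
    ring_nf
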